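/- arXiv:2208.08522 — 2 statements merged into one kernel-verified Lean document; each statement's English description precedes it below -/
import Mathlib

section
/- Let G be a directed Eulerian graph, let C be an Eulerian circuit of G, and let v be a node with d(v) ≥ 3 such that (u,v,w) appears in C for edges (u,v),(v,w). Then there exists an Eulerian circuit C* of G in which (u,v,w) does not appear. -/
/-- The underlying undirected simple graph of a directed graph `E` (no self-loops). -/
def underlyingUG {V : Type*} (E : V → V → Prop) : SimpleGraph V where
  Adj a b := a ≠ b ∧ (E a b ∨ E b a)
  symm := ⟨fun a b h => ⟨h.1.symm, h.2.symm⟩⟩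
  loopless := ⟨fun a h => h.1 rfl⟩

/-- Out-degree of `v`: number of out-neighbors. -/
noncomputable def outdeg {V : Type*} (E : V → V → Prop) (v : V) : ℕ := Set.ncard {w | E v w}

/-- In-degree of `v`: number of in-neighbors. -/
noncomputable def indeg {V : Type*} (E : V → V → Prop) (v : V) : ℕ := Set.ncard {u | E u v}

/-- The cyclic sequence of consecutive pairs of a circuit given as a vertex list. -/
def cyclicPairs {V : Type*} (c : List V) : List (V × V) := c.zip (c.rotate 1)

/-- `c` is an Eulerian circuit: a nonempty closed walk using every edge exactly once. -/
def IsEulerianCircuit {V : Type*} (E : V → V → Prop) (c : List V) : Prop :=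
  c ≠ [] ∧ (cyclicPairs c).Nodup ∧ ∀ p : V × V, p ∈ cyclicPairs c ↔ E p.1 p.2

/-- The walk `q` appears (cyclically, as consecutive edges) in the circuit `c`. -/
def Appears {V : Type*} (q c : List V) : Prop :=
  ∃ k, (q.zip q.tail) <:+: cyclicPairs (c.rotate k)

/-- `v` is a cut node of the connected undirected graph `H`. -/
def IsCutNode {V : Type*} (H : SimpleGraph V) (v : V) : Prop :=
  ¬ (H.induce {u | u ≠ v}).Connected

/-- The underlying undirected graph with node `v` (and incident edges) removed. -/
def delNode {V : Type*} (E : V → V → Prop) (v : V) := (underlyingUG E).induce {u | u ≠ v}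

/-!
Rotate `C` to start at `v` just after the edge `(u, v)`. As `v` is visited at least
`d(v) ≥ 3` times, `C` splits into three closed walks `v A v`, `v B v`, `v C' v`, the first
beginning with `(v, w)` and the last ending with `(u, v)`. Swapping the first two keeps every
edge exactly once, and now `(u, v)` is followed by the first edge of `v B v`, which is not
`(v, w)` since no edge is used twice.
-/

open List

namespace List

variable {α : Type*} {l : List α} {a b : α}

theorem Nodup.next_eq_of_pair_infix [DecidableEq α] (hl : l.Nodup) (h : [a, b] <:+: l)
    (ha : a ∈ l) : l.next a ha = b := by
  obtain ⟨P, Q, rfl⟩ := h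
  have hlen : P.length + 1 < (P ++ [a, b] ++ Q).length := by simp
  have hget : (P ++ [a, b] ++ Q)[P.length] = a := by simp
  have hnext := next_getElem _ hl P.length (by omega)
  simp only [hget, Nat.mod_eq_of_lt hlen] at hnext
  simpa using hnext

theorem Nodup.next_eq_of_pair_infix_rotate [DecidableEq α] (hl : l.Nodup) {k : ℕ}
    (h : [a, b] <:+: l.rotate k) (ha : a ∈ l) : l.next a ha = b := by
  rw [isRotated_next_eq (l' := l.rotate k) ⟨k, rfl⟩ hl]
  exact Nodup.next_eq_of_pair_infix (nodup_rotate.2 hl) h _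

theorem Nodup.next_eq_of_eq_cons_concat [DecidableEq α] {L : List α} (hL : L.Nodup)
    (h : L = b :: (l ++ [a])) (ha : a ∈ L) : L.next a ha = b := by
  subst h
  simpa using next_getLast_eq_head _ (cons_ne_nil _ _) hL

theorem exists_rotate_eq_of_pair_infix (h : [a, b] <:+: l) :
    ∃ n R, l.rotate n = b :: (R ++ [a]) := by
  obtain ⟨P, Q, rfl⟩ := h
  refine ⟨(P ++ [a]).length, Q ++ P, ?_⟩
  simpa using rotate_append_length_eq (P ++ [a]) (b :: Q)

theorem exists_eq_append_cons_append_cons_of_two_le_count [DecidableEq α] (h : 2 ≤ l.count a) :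
    ∃ A B C, l = A ++ a :: B ++ a :: C := by
  induction l with
  | nil => simp at h
  | cons x l ih =>
    by_cases hx : x = a
    · subst hx
      have : 0 < l.count x := by rw [count_cons_self] at h; omega
      obtain ⟨B, C, rfl⟩ := append_of_mem (count_pos_iff.mp this)
      exact ⟨[], B, C, rfl⟩
    · obtain ⟨A, B, C, rfl⟩ := ih (by simpa [count_cons_of_ne hx] using h)
      exact ⟨x :: A, B, C, rfl⟩

end List

section Circuits

variable {V : Type*} {E : V → V → Prop}

theorem map_fst_cyclicPairs (c : List V) : (cyclicPairs c).map Prod.fst = c :=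
  map_fst_zip (by simp)

theorem cyclicPairs_rotate (c : List V) (k : ℕ) :
    cyclicPairs (c.rotate k) = (cyclicPairs c).rotate k := by
  rw [cyclicPairs, cyclicPairs, zip_eq_zipWith, zip_eq_zipWith,
    zipWith_rotate_distrib _ _ _ _ (by simp), rotate_rotate, rotate_rotate, Nat.add_comm]

/-- `cyclicPairs (v :: A)` is the edge list of the closed walk `v, A, v`. -/
theorem cyclicPairs_cons_append_cons (v : V) (A B : List V) :
    cyclicPairs (v :: (A ++ v :: B)) = cyclicPairs (v :: A) ++ cyclicPairs (v :: B) := by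
  simp only [cyclicPairs, rotate_cons_succ, rotate_zero]
  rw [← zip_append (by simp)]
  simp

theorem cyclicPairs_swap_perm (v : V) (A B C : List V) :
    cyclicPairs (v :: (B ++ v :: A ++ v :: C)) ~ cyclicPairs (v :: (A ++ v :: B ++ v :: C)) := by
  simp only [cyclicPairs_cons_append_cons]
  exact perm_append_comm.append_right _

theorem IsEulerianCircuit.of_perm {c c' : List V} (hc : IsEulerianCircuit E c) (hc' : c' ≠ [])
    (h : cyclicPairs c' ~ cyclicPairs c) : IsEulerianCircuit E c' :=
  ⟨hc', h.nodup_iff.2 hc.2.1, fun p => h.mem_iff.trans (hc.2.2 p)⟩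

theorem IsEulerianCircuit.rotate {c : List V} (hc : IsEulerianCircuit E c) (k : ℕ) :
    IsEulerianCircuit E (c.rotate k) :=
  hc.of_perm (by simpa using hc.1) (by rw [cyclicPairs_rotate]; exact rotate_perm _ _)

theorem IsEulerianCircuit.outdeg_le_count [DecidableEq V] {c : List V}
    (hc : IsEulerianCircuit E c) (v : V) : outdeg E v ≤ c.count v := by
  set out := ((cyclicPairs c).filter (·.1 == v)).map Prod.snd
  have hsub : {x | E v x} ⊆ ↑out.toFinset := fun x hx => by
    simpa [out] using (hc.2.2 (v, x)).2 hx
  calc outdeg E v ≤ out.toFinset.card :=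
        (Set.ncard_le_ncard hsub).trans (Set.ncard_coe_finset _).le
    _ ≤ out.length := toFinset_card_le _
    _ = c.count v := by
        conv_rhs => rw [← map_fst_cyclicPairs c]
        rw [count_eq_countP, countP_map, countP_eq_length_filter, length_map]
        rfl

theorem cyclicPairs_ne_nil {c : List V} (hc : c ≠ []) : cyclicPairs c ≠ [] :=
  fun h => hc (by simpa [cyclicPairs] using congrArg length h)

end Circuits

section Appears

variable {V : Type*} {u v w : V} {c : List V}

theorem Appears.exists_rotate (h : Appears [u, v, w] c) :
    ∃ n R, cyclicPairs (c.rotate n) = (v, w) :: (R ++ [(u, v)]) := by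
  obtain ⟨k, hk⟩ := h
  obtain ⟨n, R, hR⟩ := exists_rotate_eq_of_pair_infix hk
  exact ⟨k + n, R, by rw [← rotate_rotate, cyclicPairs_rotate, hR]⟩

theorem Appears.next_eq [DecidableEq V] (h : Appears [u, v, w] c) (hc : (cyclicPairs c).Nodup)
    (huv : (u, v) ∈ cyclicPairs c) : (cyclicPairs c).next (u, v) huv = (v, w) := by
  obtain ⟨k, hk⟩ := h
  rw [cyclicPairs_rotate] at hk
  exact Nodup.next_eq_of_pair_infix_rotate hc hk huv

theorem not_appears_swap [DecidableEq V] {A B C : List V} {R : List (V × V)}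
    (hnd : (cyclicPairs (v :: (A ++ v :: B ++ v :: C))).Nodup)
    (h : cyclicPairs (v :: (A ++ v :: B ++ v :: C)) = (v, w) :: (R ++ [(u, v)])) :
    ¬ Appears [u, v, w] (v :: (B ++ v :: A ++ v :: C)) := by
  intro happ
  obtain ⟨a, α, hα⟩ := exists_cons_of_ne_nil (cyclicPairs_ne_nil (cons_ne_nil v A))
  obtain ⟨b, β, hβ⟩ := exists_cons_of_ne_nil (cyclicPairs_ne_nil (cons_ne_nil v B))
  obtain ⟨γ, z, hγ⟩ := (eq_nil_or_concat (cyclicPairs (v :: C))).resolve_left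
    (cyclicPairs_ne_nil (cons_ne_nil v C))
  have hL : cyclicPairs (v :: (A ++ v :: B ++ v :: C)) = a :: (α ++ b :: β ++ γ ++ [z]) := by
    simp [cyclicPairs_cons_append_cons, hα, hβ, hγ]
  have hL' : cyclicPairs (v :: (B ++ v :: A ++ v :: C)) = b :: (β ++ a :: α ++ γ ++ [z]) := by
    simp [cyclicPairs_cons_append_cons, hα, hβ, hγ]
  have hnd' := (cyclicPairs_swap_perm v A B C).nodup_iff.2 hnd
  rw [hL] at h hnd
  obtain ⟨rfl, htail⟩ := cons.inj h
  obtain rfl : z = (u, v) := by simpa using (append_inj' htail rfl).2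
  have hvwb : (v, w) ≠ b := fun hvwb => by simp [hvwb] at hnd
  have hmem : (u, v) ∈ cyclicPairs (v :: (B ++ v :: A ++ v :: C)) := by rw [hL']; simp
  exact hvwb <|
    (happ.next_eq hnd' hmem).symm.trans (Nodup.next_eq_of_eq_cons_concat hnd' hL' hmem)

end Appears

theorem high_degree_not_safe_general {V : Type*} (E : V → V → Prop)
    (c : List V) (hc : IsEulerianCircuit E c)
    (u v w : V) (hd : 3 ≤ outdeg E v)
    (happ : Appears [u, v, w] c) :
    ∃ cstar : List V, IsEulerianCircuit E cstar ∧ ¬ Appears [u, v, w] cstar := by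
  classical
  obtain ⟨n, R, hR⟩ := happ.exists_rotate
  have hcn := hc.rotate n
  obtain ⟨T, hT⟩ : ∃ T, c.rotate n = v :: T :=
    ⟨_, by rw [← map_fst_cyclicPairs (c.rotate n), hR, map_cons]⟩
  have hcount : 2 ≤ T.count v := by
    have := hd.trans (hcn.outdeg_le_count v)
    rw [hT, count_cons_self] at this
    omega
  obtain ⟨A, B, C, rfl⟩ := exists_eq_append_cons_append_cons_of_two_le_count hcount
  rw [hT] at hR hcn
  exact ⟨_, hcn.of_perm (cons_ne_nil _ _) (cyclicPairs_swap_perm v A B C),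
    not_appears_swap hcn.2.1 hR⟩

/-- If `d(v) ≥ 3` and `(u,v,w)` appears in the Eulerian circuit `C`, then some
Eulerian circuit `C*` avoids `(u,v,w)`. -/
theorem high_degree_not_safe {V : Type*} [Fintype V] (E : V → V → Prop)
    (hloop : ∀ x : V, ¬ E x x) (hconn : (underlyingUG E).Connected)
    (c : List V) (hc : IsEulerianCircuit E c)
    (u v w : V) (huv : E u v) (hvw : E v w) (hd : 3 ≤ outdeg E v)
    (happ : Appears [u, v, w] c) :
    ∃ cstar : List V, IsEulerianCircuit E cstar ∧ ¬ Appears [u, v, w] cstar :=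
  high_degree_not_safe_general E c hc u v w hd happ
end

section
/- Let G be a directed Eulerian graph without parallel edges or self-loops. If every node v of G satisfies d(v) = 1, or d(v) = 2 and v is a cut node of U(G), then for every edge (u,v) of G there is a unique edge (v,w) such that (u,v) is immediately followed by (v,w) in every Eulerian circuit of G. -/
/-- `v ∈ A(G)`: `d(v) = 1`, or `d(v) = 2` and `v` is a cut node of `U(G)`. -/
def inA {V : Type*} (E : V → V → Prop) (v : V) : Prop :=
  outdeg E v = 1 ∨ (outdeg E v = 2 ∧ IsCutNode (underlyingUG E) v)

/-!
Unroll an Eulerian circuit into an `n`-periodic sequence `f : ℤ → V` and let `(u, v)` be one of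
its edges. If `d(v) = 1` the successor of `(u, v)` is forced. If `d(v) = 2`, the circuit visits `v`
exactly twice per period; the two arcs between these visits avoid `v` and together cover every
other vertex, so, `v` being a cut node, the two out-neighbours of `v` lie in different components
of `U(G) - v`. The arc that leaves `v` through the out-neighbour not following `(u, v)` comes back
to `v` through `u`. Hence `(u, v)` is followed by the out-neighbour of `v` that is not in the
component of `u`, whichever Eulerian circuit we look at.
-/

section

variable {V : Type*}

lemma toNat_emod_lt {i n : ℤ} (hn : 0 < n) : (i % n).toNat < n.toNat := by
  have := Int.emod_nonneg i hn.ne'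
  have := Int.emod_lt_of_pos i hn
  omega

lemma exists_mem_Ioc_dvd_sub {n : ℤ} (hn : 0 < n) (a m : ℤ) :
    ∃ k, a < k ∧ k ≤ a + n ∧ n ∣ k - m := by
  obtain ⟨hlo, hhi⟩ := toIocMod_mem_Ioc hn a m
  refine ⟨toIocMod hn a m, hlo, hhi, -toIocDiv hn a m, ?_⟩
  rw [← neg_sub, self_sub_toIocMod, smul_eq_mul]
  ring

lemma exists_other_of_ncard_eq_two {s : Set V} (hs : s.ncard = 2) {a : V} (ha : a ∈ s) :
    ∃ b ∈ s, b ≠ a ∧ ∀ z ∈ s, z = a ∨ z = b := by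
  obtain ⟨x, y, hxy, rfl⟩ := Set.ncard_eq_two.1 hs
  rcases ha with rfl | rfl
  · exact ⟨y, by simp, hxy.symm, fun z hz => hz⟩
  · exact ⟨x, by simp, hxy, fun z hz => hz.symm⟩

section CyclicList

lemma natCast_length_pos {c : List V} (hc : c ≠ []) : (0 : ℤ) < c.length :=
  Int.natCast_pos.2 (List.length_pos_iff.2 hc)

def cyclicGet (c : List V) (hc : c ≠ []) (i : ℤ) : V :=
  c.get ⟨(i % c.length).toNat, by simpa using toNat_emod_lt (i := i) (natCast_length_pos hc)⟩

lemma length_cyclicPairs (c : List V) : (cyclicPairs c).length = c.length := by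
  simp [cyclicPairs]

variable {c : List V}

lemma cyclicGet_natCast (hc : c ≠ []) (j : ℕ) :
    cyclicGet c hc j = c.get ⟨j % c.length, Nat.mod_lt _ (List.length_pos_iff.2 hc)⟩ := by
  simp only [cyclicGet]
  congr 2

lemma cyclicGet_toNat_emod_add (hc : c ≠ []) (i k : ℤ) :
    cyclicGet c hc ((i % c.length).toNat + k) = cyclicGet c hc (i + k) := by
  simp only [cyclicGet, Int.toNat_of_nonneg (Int.emod_nonneg i (natCast_length_pos hc).ne'),
    Int.emod_add_emod]

lemma cyclicGet_periodic (hc : c ≠ []) : Function.Periodic (cyclicGet c hc) c.length := by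
  intro i
  simp [cyclicGet]

lemma cyclicGet_rotate (hc : c ≠ []) (k : ℕ) (i : ℤ) :
    cyclicGet (c.rotate k) (by simpa using hc) i = cyclicGet c hc (i + k) := by
  have hn := natCast_length_pos hc
  have hi := Int.emod_nonneg i hn.ne'
  simp only [cyclicGet, List.get_eq_getElem, List.getElem_rotate, List.length_rotate]
  congr 1
  zify [hi]
  rw [Int.toNat_of_nonneg hi, Int.emod_add_emod, Int.toNat_of_nonneg (Int.emod_nonneg _ hn.ne')]

lemma getElem_cyclicPairs (hc : c ≠ []) (s : ℕ) (hs : s < (cyclicPairs c).length) :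
    (cyclicPairs c)[s] = (cyclicGet c hc s, cyclicGet c hc (s + 1)) := by
  have hs' : s < c.length := length_cyclicPairs c ▸ hs
  rw [← Nat.cast_one, ← Nat.cast_add, cyclicGet_natCast, cyclicGet_natCast]
  simp [cyclicPairs, List.getElem_zip, List.getElem_rotate, Nat.mod_eq_of_lt hs']

lemma getElem_cyclicPairs_rotate (hc : c ≠ []) (k s : ℕ)
    (hs : s < (cyclicPairs (c.rotate k)).length) :
    (cyclicPairs (c.rotate k))[s] = (cyclicGet c hc (s + k), cyclicGet c hc (s + k + 1)) := by
  rw [getElem_cyclicPairs (by simpa using hc), cyclicGet_rotate hc, cyclicGet_rotate hc,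
    add_right_comm]

lemma getElem_cyclicPairs_toNat_emod (hc : c ≠ []) (i : ℤ) :
    ∃ h, (cyclicPairs c)[(i % c.length).toNat]'h = (cyclicGet c hc i, cyclicGet c hc (i + 1)) := by
  refine ⟨by simpa [length_cyclicPairs] using toNat_emod_lt (i := i) (natCast_length_pos hc), ?_⟩
  rw [getElem_cyclicPairs hc, cyclicGet_toNat_emod_add]
  simpa using cyclicGet_toNat_emod_add hc i 0

lemma mem_cyclicPairs_iff (hc : c ≠ []) {a b : V} :
    (a, b) ∈ cyclicPairs c ↔ ∃ i, cyclicGet c hc i = a ∧ cyclicGet c hc (i + 1) = b := by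
  constructor
  · intro h
    obtain ⟨s, hs, hsab⟩ := List.mem_iff_getElem.1 h
    rw [getElem_cyclicPairs hc, Prod.mk.injEq] at hsab
    exact ⟨s, hsab⟩
  · rintro ⟨i, rfl, rfl⟩
    obtain ⟨h, hi⟩ := getElem_cyclicPairs_toNat_emod hc i
    exact hi ▸ List.getElem_mem h

lemma appears_iff_exists_cyclicGet {c : List V} (hc : c ≠ []) (h2 : 2 ≤ c.length) {u v w : V} :
    Appears [u, v, w] c ↔
      ∃ i, cyclicGet c hc i = u ∧ cyclicGet c hc (i + 1) = v ∧ cyclicGet c hc (i + 2) = w := by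
  have hpairs : [u, v, w].zip [u, v, w].tail = [(u, v), (v, w)] := rfl
  simp only [Appears, hpairs, List.infix_iff_getElem?]
  constructor
  · rintro ⟨k, s, -, h⟩
    have h0 := h 0 (by simp)
    have h1 := h 1 (by simp)
    simp only [List.getElem?_eq_some_iff, getElem_cyclicPairs_rotate hc, List.getElem_cons_zero,
      List.getElem_cons_succ, Prod.mk.injEq, zero_add, Nat.cast_add, Nat.cast_one] at h0 h1
    obtain ⟨-, hu, hv⟩ := h0
    obtain ⟨-, -, hw⟩ := h1
    refine ⟨s + k, hu, hv, ?_⟩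
    convert hw using 2
    ring
  · rintro ⟨i, rfl, rfl, rfl⟩
    refine ⟨(i % c.length).toNat, 0, by simpa [length_cyclicPairs] using h2, fun j hj => ?_⟩
    have hj2 : j < 2 := by simpa using hj
    rw [add_zero, List.getElem?_eq_getElem (by simpa [length_cyclicPairs] using hj2.trans_le h2),
      getElem_cyclicPairs_rotate hc, add_comm (j : ℤ), cyclicGet_toNat_emod_add, add_assoc,
      cyclicGet_toNat_emod_add]
    interval_cases j <;> norm_num [one_add_one_eq_two]

end CyclicList

def JoinedAvoiding (E : V → V → Prop) (v x y : V) : Prop :=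
  ∃ (hx : x ≠ v) (hy : y ≠ v), (delNode E v).Reachable ⟨x, hx⟩ ⟨y, hy⟩

namespace JoinedAvoiding

variable {E : V → V → Prop} {v x y z : V}

lemma symm (h : JoinedAvoiding E v x y) : JoinedAvoiding E v y x :=
  let ⟨hx, hy, r⟩ := h; ⟨hy, hx, r.symm⟩

lemma trans (hxy : JoinedAvoiding E v x y) (hyz : JoinedAvoiding E v y z) :
    JoinedAvoiding E v x z :=
  let ⟨hx, _, r⟩ := hxy; let ⟨_, hz, r'⟩ := hyz; ⟨hx, hz, r.trans r'⟩

lemma of_edge (hx : x ≠ v) (hy : y ≠ v) (hxy : x ≠ y) (h : E x y) : JoinedAvoiding E v x y :=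
  ⟨hx, hy, SimpleGraph.Adj.reachable (G := delNode E v) ⟨hxy, Or.inl h⟩⟩

end JoinedAvoiding

lemma not_isCutNode_of_forall_joinedAvoiding {E : V → V → Prop} {v x : V} (hx : x ≠ v)
    (h : ∀ z, z ≠ v → JoinedAvoiding E v z x) : ¬ IsCutNode (underlyingUG E) v := by
  have reach (z : {u | u ≠ v}) : (delNode E v).Reachable z ⟨x, hx⟩ :=
    let ⟨_, _, r⟩ := h z z.2; r
  have : Nonempty {u | u ≠ v} := ⟨⟨x, hx⟩⟩
  exact not_not_intro ⟨fun z z' => (reach z).trans (reach z').symm⟩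

/-- An Eulerian circuit of length `n`, unrolled into an `n`-periodic sequence of vertices. -/
structure IsEulerTour (E : V → V → Prop) (n : ℤ) (f : ℤ → V) : Prop where
  pos : 0 < n
  periodic : Function.Periodic f n
  isEdge : ∀ i, E (f i) (f (i + 1))
  exists_of_edge : ∀ {a b}, E a b → ∃ i, f i = a ∧ f (i + 1) = b
  dvd_sub_of_eq : ∀ {i j}, f i = f j → f (i + 1) = f (j + 1) → n ∣ i - j

lemma IsEulerianCircuit.isEulerTour {E : V → V → Prop} {c : List V}
    (hc : IsEulerianCircuit E c) : IsEulerTour E c.length (cyclicGet c hc.1) where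
  pos := natCast_length_pos hc.1
  periodic := cyclicGet_periodic hc.1
  isEdge i := (hc.2.2 _).1 ((mem_cyclicPairs_iff hc.1).2 ⟨i, rfl, rfl⟩)
  exists_of_edge h := (mem_cyclicPairs_iff hc.1).1 ((hc.2.2 (_, _)).2 h)
  dvd_sub_of_eq {i j} h0 h1 := by
    obtain ⟨hi, hfi⟩ := getElem_cyclicPairs_toNat_emod hc.1 i
    obtain ⟨hj, hfj⟩ := getElem_cyclicPairs_toNat_emod hc.1 j
    have hij := hc.2.1.getElem_inj_iff.1 (hfi.trans ((Prod.ext h0 h1).trans hfj.symm))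
    have hn := natCast_length_pos hc.1
    refine Int.ModEq.dvd ?_
    simpa [Int.ModEq, Int.toNat_of_nonneg (Int.emod_nonneg _ hn.ne')] using
      congrArg (Nat.cast : ℕ → ℤ) hij.symm

namespace IsEulerTour

variable {E : V → V → Prop} {n : ℤ} {f : ℤ → V}

lemma apply_eq_of_dvd (ht : IsEulerTour E n f) {i j : ℤ} (h : n ∣ i - j) : f i = f j := by
  obtain ⟨m, hm⟩ := h
  rw [← ht.periodic.sub_zsmul_eq m, smul_eq_mul, mul_comm, ← hm, sub_sub_cancel]

lemma eq_of_apply_eq (ht : IsEulerTour E n f) {i j : ℤ} (h0 : f i = f j)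
    (h1 : f (i + 1) = f (j + 1)) (hij : i - j < n) (hji : j - i < n) : i = j :=
  sub_eq_zero.1 (Int.eq_zero_of_abs_lt_dvd (ht.dvd_sub_of_eq h0 h1) (abs_sub_lt_iff.2 ⟨hij, hji⟩))

lemma apply_add_two_congr (ht : IsEulerTour E n f) {i j : ℤ} (h0 : f i = f j)
    (h1 : f (i + 1) = f (j + 1)) : f (i + 2) = f (j + 2) :=
  ht.apply_eq_of_dvd (by simpa using ht.dvd_sub_of_eq h0 h1)

lemma exists_mem_Ioc (ht : IsEulerTour E n f) (a m : ℤ) :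
    ∃ k, a < k ∧ k ≤ a + n ∧ f k = f m ∧ f (k + 1) = f (m + 1) := by
  obtain ⟨k, hak, hka, hdvd⟩ := exists_mem_Ioc_dvd_sub ht.pos a m
  exact ⟨k, hak, hka, ht.apply_eq_of_dvd hdvd, ht.apply_eq_of_dvd (by simpa using hdvd)⟩

lemma two_le (ht : IsEulerTour E n f) (hloop : ∀ x, ¬ E x x) : 2 ≤ n := by
  by_contra! h
  have hn1 : n = 1 := by linarith [ht.pos]
  have h01 : f 1 = f 0 := by simpa [hn1] using ht.periodic 0
  exact hloop (f 0) (by simpa [h01] using ht.isEdge 0)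

lemma joinedAvoiding_of_avoids (ht : IsEulerTour E n f) (hloop : ∀ x, ¬ E x x) {v : V}
    {a b : ℤ} (hab : a ≤ b) (havoid : ∀ k, a ≤ k → k ≤ b → f k ≠ v) :
    JoinedAvoiding E v (f a) (f b) := by
  induction b, hab using Int.leInduction with
  | base => exact ⟨havoid a le_rfl le_rfl, havoid a le_rfl le_rfl, .rfl⟩
  | succ b hab ih =>
    refine (ih fun k hak hkb => havoid k hak (by omega)).trans (.of_edge ?_ ?_ ?_ (ht.isEdge b))
    · exact havoid b hab (by omega)
    · exact havoid (b + 1) (by omega) le_rfl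
    · exact fun h => hloop _ (h ▸ ht.isEdge b)

lemma isEdge_add_one (ht : IsEulerTour E n f) (i : ℤ) : E (f (i + 1)) (f (i + 2)) := by
  simpa [add_assoc, one_add_one_eq_two] using ht.isEdge (i + 1)

lemma exists_apply_eq_of_ne (ht : IsEulerTour E n f) (hconn : (underlyingUG E).Connected)
    {z v : V} (hzv : z ≠ v) : ∃ m, f m = z := by
  obtain ⟨w⟩ := hconn.preconnected z v
  rcases (w.adj_snd (SimpleGraph.Walk.not_nil_of_ne hzv)).2 with h | h
  · obtain ⟨m, hm, -⟩ := ht.exists_of_edge h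
    exact ⟨m, hm⟩
  · obtain ⟨m, -, hm⟩ := ht.exists_of_edge h
    exact ⟨m + 1, hm⟩

lemma exists_other_visit (ht : IsEulerTour E n f) {v : V} (hdeg : outdeg E v = 2) {p : ℤ}
    (hp : f p = v) :
    ∃ j, p < j ∧ j < p + n ∧ f j = v ∧ (∀ k, p < k → k < p + n → f k = v → k = j) ∧
      ∀ z, E v z → z = f (p + 1) ∨ z = f (j + 1) := by
  obtain ⟨y, hy, hyp, hout⟩ :=
    exists_other_of_ncard_eq_two hdeg (a := f (p + 1)) (hp ▸ ht.isEdge p)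
  obtain ⟨m, hm, hm1⟩ := ht.exists_of_edge hy
  obtain ⟨j, hpj, hjn, hj, hj1⟩ := ht.exists_mem_Ioc p m
  rw [hm] at hj
  rw [hm1] at hj1
  have hjn' : j ≠ p + n := by
    rintro rfl
    exact hyp (by rw [← hj1, add_right_comm, ht.periodic])
  refine ⟨j, hpj, lt_of_le_of_ne hjn hjn', hj, fun k hpk hkn hk => ?_,
    fun z hz => hj1 ▸ hout z hz⟩
  rcases hout _ (hk ▸ ht.isEdge k) with h | h
  · have := ht.eq_of_apply_eq (hk.trans hp.symm) h (by omega) (by omega)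
    omega
  · exact ht.eq_of_apply_eq (hk.trans hj.symm) (h.trans hj1.symm) (by omega) (by omega)

lemma joinedAvoiding_of_ne_apply_add_two (ht : IsEulerTour E n f) (hloop : ∀ x, ¬ E x x)
    {v : V} (hdeg : outdeg E v = 2) {i : ℤ} (hv : f (i + 1) = v) {z : V} (hz : E v z)
    (hzw : z ≠ f (i + 2)) : JoinedAvoiding E v z (f i) := by
  obtain ⟨j, hij, hjn, hj, honly, hout⟩ := ht.exists_other_visit hdeg hv
  have hzj : z = f (j + 1) := (hout z hz).resolve_left (by simpa [add_assoc] using hzw)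
  have hin : f (i + n) ≠ v := by
    rw [ht.periodic]
    exact fun h => hloop v (by simpa [h, hv] using ht.isEdge i)
  have hjin : j ≠ i + n := fun h => hin (h ▸ hj)
  rw [hzj, ← ht.periodic i]
  refine ht.joinedAvoiding_of_avoids hloop (by omega) fun k hjk hkn hk => ?_
  have := honly k (by omega) (by omega) hk
  omega

lemma joinedAvoiding_of_two_visits (ht : IsEulerTour E n f) (hloop : ∀ x, ¬ E x x)
    (hconn : (underlyingUG E).Connected) {v : V} {p j : ℤ} (hp : f p = v) (hpj : p < j)
    (hjn : j < p + n) (hj : f j = v) (honly : ∀ k, p < k → k < p + n → f k = v → k = j)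
    {z : V} (hz : z ≠ v) :
    JoinedAvoiding E v (f (p + 1)) z ∨ JoinedAvoiding E v (f (j + 1)) z := by
  obtain ⟨m, rfl⟩ := ht.exists_apply_eq_of_ne hconn hz
  obtain ⟨k, hpk, hkn, hk, -⟩ := ht.exists_mem_Ioc p m
  rw [← hk] at hz ⊢
  have hkn' : k ≠ p + n := fun h => hz (by rw [h, ht.periodic, hp])
  have hkj : k ≠ j := fun h => hz (h ▸ hj)
  have havoid (l : ℤ) (hpl : p < l) (hln : l < p + n) (hlj : l ≠ j) : f l ≠ v :=
    fun h => hlj (honly l hpl hln h)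
  rcases lt_or_gt_of_ne hkj with h | h
  · exact .inl <| ht.joinedAvoiding_of_avoids hloop (by omega) fun l h1 h2 =>
      havoid l (by omega) (by omega) (by omega)
  · exact .inr <| ht.joinedAvoiding_of_avoids hloop (by omega) fun l h1 h2 =>
      havoid l (by omega) (by omega) (by omega)

lemma not_joinedAvoiding_of_isCutNode (ht : IsEulerTour E n f) (hloop : ∀ x, ¬ E x x)
    (hconn : (underlyingUG E).Connected) {v : V} (hdeg : outdeg E v = 2)
    (hcut : IsCutNode (underlyingUG E) v) {x y : V} (hx : E v x) (hy : E v y) (hxy : x ≠ y) :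
    ¬ JoinedAvoiding E v x y := by
  intro hjoin
  obtain ⟨p, hp, -⟩ := ht.exists_of_edge hx
  obtain ⟨j, hpj, hjn, hj, honly, hout⟩ := ht.exists_other_visit hdeg hp
  have hsucc : JoinedAvoiding E v (f (p + 1)) (f (j + 1)) := by
    rcases hout x hx with rfl | rfl <;> rcases hout y hy with rfl | rfl
    exacts [absurd rfl hxy, hjoin, hjoin.symm, absurd rfl hxy]
  refine not_isCutNode_of_forall_joinedAvoiding hsucc.1 (fun z hz => ?_) hcut
  rcases ht.joinedAvoiding_of_two_visits hloop hconn hp hpj hjn hj honly hz with h | h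
  exacts [h.symm, (hsucc.trans h).symm]

lemma apply_add_two_eq_of_inA (hf : IsEulerTour E n f) {m : ℤ} {g : ℤ → V}
    (hg : IsEulerTour E m g) (hloop : ∀ x, ¬ E x x) (hconn : (underlyingUG E).Connected)
    {v : V} (hA : inA E v) {i j : ℤ} (hfv : f (i + 1) = v) (hgv : g (j + 1) = v)
    (hfg : f i = g j) : f (i + 2) = g (j + 2) := by
  have hfw : E v (f (i + 2)) := hfv ▸ hf.isEdge_add_one i
  have hgw : E v (g (j + 2)) := hgv ▸ hg.isEdge_add_one j
  rcases hA with hd1 | ⟨hd2, hcut⟩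
  · obtain ⟨x, hx⟩ := Set.ncard_eq_one.1 hd1
    have hf' : f (i + 2) ∈ {w | E v w} := hfw
    have hg' : g (j + 2) ∈ {w | E v w} := hgw
    rw [hx] at hf' hg'
    exact hf'.trans hg'.symm
  · by_contra hne
    have hgf := hf.joinedAvoiding_of_ne_apply_add_two hloop hd2 hfv hgw (Ne.symm hne)
    have hfg' := hg.joinedAvoiding_of_ne_apply_add_two hloop hd2 hgv hfw hne
    exact hf.not_joinedAvoiding_of_isCutNode hloop hconn hd2 hcut hfw hgw hne
      ((hfg ▸ hfg').trans hgf.symm)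

end IsEulerTour

lemma IsEulerianCircuit.appears_iff {E : V → V → Prop} {c : List V} (hc : IsEulerianCircuit E c)
    (hloop : ∀ x, ¬ E x x) {u v w : V} :
    Appears [u, v, w] c ↔ ∃ i, cyclicGet c hc.1 i = u ∧ cyclicGet c hc.1 (i + 1) = v ∧
      cyclicGet c hc.1 (i + 2) = w :=
  appears_iff_exists_cyclicGet hc.1 (by exact_mod_cast hc.isEulerTour.two_le hloop)

end

theorem A_eq_V_forced_successor_general {V : Type*} (E : V → V → Prop)
    (hloop : ∀ x : V, ¬ E x x) (hconn : (underlyingUG E).Connected)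
    (heul : ∃ c : List V, IsEulerianCircuit E c)
    (hA : ∀ v : V, inA E v) :
    ∀ u v : V, E u v → ∃! w : V, E v w ∧
      ∀ c : List V, IsEulerianCircuit E c → Appears [u, v, w] c := by
  intro u v huv
  obtain ⟨c₀, hc₀⟩ := heul
  have ht₀ := hc₀.isEulerTour
  obtain ⟨i, rfl, rfl⟩ := ht₀.exists_of_edge huv
  refine ⟨cyclicGet c₀ hc₀.1 (i + 2), ⟨ht₀.isEdge_add_one i, fun c hc => ?_⟩, ?_⟩
  · obtain ⟨j, hju, hjv⟩ := hc.isEulerTour.exists_of_edge huv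
    rw [ht₀.apply_add_two_eq_of_inA hc.isEulerTour hloop hconn (hA _) rfl hjv hju.symm]
    exact (hc.appears_iff hloop).2 ⟨j, hju, hjv, rfl⟩
  · rintro w ⟨-, hw⟩
    obtain ⟨j, hju, hjv, rfl⟩ := (hc₀.appears_iff hloop).1 (hw c₀ hc₀)
    exact ht₀.apply_add_two_congr hju hjv

/-- If every node is in `A(G)`, then every edge `(u,v)` is followed by a unique
edge `(v,w)` in every Eulerian circuit. -/
theorem A_eq_V_forced_successor {V : Type*} [Fintype V] (E : V → V → Prop)
    (hloop : ∀ x : V, ¬ E x x) (hconn : (underlyingUG E).Connected)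
    (heul : ∃ c : List V, IsEulerianCircuit E c)
    (hA : ∀ v : V, inA E v) :
    ∀ u v : V, E u v → ∃! w : V, E v w ∧
      ∀ c : List V, IsEulerianCircuit E c → Appears [u, v, w] c :=
  A_eq_V_forced_successor_general E hloop hconn heul hA
end
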